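/- arXiv:math/0610939 — 3 statements merged into one kernel-verified Lean document; each statement's English description precedes it below -/
import Mathlib

section
/- Upper bound on the conditional occurrence probability: for any local configuration η on a ball B = B(x,r) and boundary configuration σ on δB, μ_{a,b}(I_x^η = 1 | σ) ≤ Wₙ(η)·(1 + 1_{σ≠σ⁰}·Δₙ(η)/Wₙ(σ)). -/
open Filter

attribute [local instance] Classical.propDecidable

noncomputable section

/-- Number of positive vertices of configuration `c` on `S`. -/
def confK {V : Type*} (S : Finset V) (c : V → Bool) : ℕ :=
  (S.filter fun x => c x = true).card

/-- Ordered pairs of adjacent positive vertices in `S` (twice the number of positive edges). -/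
def confPosPairs {V : Type*} (G : SimpleGraph V) (S : Finset V) (c : V → Bool) : ℕ :=
  ((S ×ˢ S).filter fun q => G.Adj q.1 q.2 ∧ c q.1 = true ∧ c q.2 = true).card

/-- Perimeter `γ(c) = 𝒱·k(c) − 2·|{positive edges inside S}|`. -/
def confGamma {V : Type*} (G : SimpleGraph V) (Vdeg : ℕ) (S : Finset V) (c : V → Bool) : ℤ :=
  (Vdeg : ℤ) * confK S c - confPosPairs G S c

/-- Weight `W(c) = exp(2a·k(c) − 2b·γ(c))`. -/
def confW {V : Type*} (G : SimpleGraph V) (Vdeg : ℕ) (a b : ℝ) (S : Finset V) (c : V → Bool) : ℝ :=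
  Real.exp (2 * a * confK S c - 2 * b * confGamma G Vdeg S c)

/-- Number of edges joining a positive vertex of `c` on `S` to a positive vertex of `c'` on `S'`. -/
def confConn {V : Type*} (G : SimpleGraph V) (S S' : Finset V) (c c' : V → Bool) : ℕ :=
  ((S ×ˢ S').filter fun q => G.Adj q.1 q.2 ∧ c q.1 = true ∧ c' q.2 = true).card

/-- Combined configuration: `c` on `S`, `c'` elsewhere. -/
def confUnion {V : Type*} (S : Finset V) (c c' : V → Bool) : V → Bool :=
  fun x => if x ∈ S then c x else c' x

/-- Outer vertex boundary of `S`. -/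
def outerBoundary {V : Type*} [Fintype V] (G : SimpleGraph V) (S : Finset V) : Finset V :=
  Finset.univ.filter fun z => z ∉ S ∧ ∃ y ∈ S, G.Adj y z

/-- Unnormalized Gibbs weight of the Ising model with magnetic field `a`, pair potential `b`. -/
def gibbsWeight {V : Type*} [Fintype V] (G : SimpleGraph V) (a b : ℝ) (σ : V → Bool) : ℝ :=
  Real.exp (a * ∑ x : V, (if σ x then (1 : ℝ) else -1) +
    b / 2 * ∑ q ∈ Finset.univ.filter (fun q : V × V => G.Adj q.1 q.2),
      (if σ q.1 then (1 : ℝ) else -1) * (if σ q.2 then (1 : ℝ) else -1))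

/-- Probability of a set `A` of configurations under the Ising Gibbs measure. -/
def gibbsProb {V : Type*} [Fintype V] (G : SimpleGraph V) (a b : ℝ)
    (A : Finset (V → Bool)) : ℝ :=
  (∑ σ ∈ A, gibbsWeight G a b σ) / ∑ σ : V → Bool, gibbsWeight G a b σ

/-- Expectation of `f` under the Ising Gibbs measure. -/
def gibbsExp {V : Type*} [Fintype V] (G : SimpleGraph V) (a b : ℝ)
    (f : (V → Bool) → ℝ) : ℝ :=
  (∑ σ : V → Bool, f σ * gibbsWeight G a b σ) / ∑ σ : V → Bool, gibbsWeight G a b σ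

/-- The event that the configuration restricted to `S` equals `η`. -/
def occursOn {V : Type*} [Fintype V] (S : Finset V) (η : V → Bool) : Finset (V → Bool) :=
  Finset.univ.filter fun σ => ∀ y ∈ S, σ y = η y

/-- The probability gap `Δ(η) = max_{σ ≠ σ⁰ on δB} W(η σ)/W(η)`. -/
def probGap {V : Type*} [Fintype V] (G : SimpleGraph V) (Vdeg : ℕ) (a b : ℝ)
    (B : Finset V) (η : V → Bool) : ℝ :=
  ⨆ σ : {σ : V → Bool // ∃ z ∈ outerBoundary G B, σ z = true},
    confW G Vdeg a b (B ∪ outerBoundary G B) (confUnion B η σ.1) / confW G Vdeg a b B η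

/-- The maximality probability `Θ(η) = max_{η' ≠ η, V₊(η') ⊇ V₊(η)} W(η')/W(η)`. -/
def maxProb {V : Type*} (G : SimpleGraph V) (Vdeg : ℕ) (a b : ℝ)
    (B : Finset V) (η : V → Bool) : ℝ :=
  ⨆ η' : {η' : V → Bool // (∀ y ∈ B, η y = true → η' y = true) ∧ ∃ y ∈ B, η' y ≠ η y},
    confW G Vdeg a b B η'.1 / confW G Vdeg a b B η

/-- Poisson probability mass function. -/
def poissonPMF (lam : ℝ) (m : ℕ) : ℝ := Real.exp (-lam) * lam ^ m / (m.factorial : ℝ)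

/-- Total variation distance between two (sub)probability mass functions on `ℕ`. -/
def dTVnat (f g : ℕ → ℝ) : ℝ := (1 / 2) * ∑' m : ℕ, |f m - g m|

/-- Torus distance of a residue: `min(c, n − c)`. -/
def torusTd (n : ℕ) (c : ZMod n) : ℕ := min c.val (-c).val

/-- The `d`-dimensional lattice torus of size `n`: `x ∼ y` iff `x ≠ y` and `‖x − y‖_p ≤ ρ`. -/
def torusGraph (d n ρ : ℕ) (p : ENNReal) : SimpleGraph (Fin d → ZMod n) where
  Adj x y := x ≠ y ∧
    (if p = ⊤ then ∀ i, torusTd n (x i - y i) ≤ ρ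
     else ∑ i, (torusTd n (x i - y i) : ℝ) ^ p.toReal ≤ (ρ : ℝ) ^ p.toReal)
  symm := by
    constructor
    rintro x y ⟨hne, h⟩
    have key : ∀ i, torusTd n (y i - x i) = torusTd n (x i - y i) := by
      intro i
      have h1 : y i - x i = -(x i - y i) := by ring
      rw [h1]
      simp only [torusTd, neg_neg]
      exact min_comm _ _
    exact ⟨hne.symm, by simp only [key]; exact h⟩
  loopless := by constructor; rintro x ⟨hne, -⟩; exact hne rfl

/-- The ball `B(x,r)` for the graph distance on the torus. -/
def torusBall (d n ρ : ℕ) [NeZero n] (p : ENNReal) (x : Fin d → ZMod n) (r : ℕ) :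
    Finset (Fin d → ZMod n) :=
  Finset.univ.filter fun y => (torusGraph d n ρ p).dist x y ≤ r

/-- Translation of a local configuration `η` (given around `0`) to the ball around `x`. -/
def torusTrans {d n : ℕ} (x : Fin d → ZMod n) (η : (Fin d → ZMod n) → Bool) :
    (Fin d → ZMod n) → Bool := fun y => η (y - x)

/-- The `d`-dimensional lattice `ℤ^d` with `x ∼ y` iff `x ≠ y` and `‖x − y‖_p ≤ ρ`. -/
def latticeGraph (d ρ : ℕ) (p : ENNReal) : SimpleGraph (Fin d → ℤ) where
  Adj v w := v ≠ w ∧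
    (if p = ⊤ then ∀ i, (v i - w i).natAbs ≤ ρ
     else ∑ i, ((v i - w i).natAbs : ℝ) ^ p.toReal ≤ (ρ : ℝ) ^ p.toReal)
  symm := by
    constructor
    rintro v w ⟨hne, h⟩
    have key : ∀ i, (w i - v i).natAbs = (v i - w i).natAbs := fun i => by omega
    exact ⟨hne.symm, by simp only [key]; exact h⟩
  loopless := by constructor; rintro v ⟨hne, -⟩; exact hne rfl

/-- The ball `B(0,r)` of the lattice `ℤ^d`, as a finite set. -/
def latticeBall (d ρ : ℕ) (p : ENNReal) (r : ℕ) : Finset (Fin d → ℤ) :=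
  (Fintype.piFinset fun _ : Fin d => Finset.Icc (-(ρ * r : ℤ)) (ρ * r)).filter
    fun v => (latticeGraph d ρ p).dist 0 v ≤ r

/-- Centered integer representative of a residue mod `n`. -/
def torusRep (n : ℕ) (c : ZMod n) : ℤ :=
  if 2 * c.val ≤ n then (c.val : ℤ) else (c.val : ℤ) - n

/-- A local configuration on the lattice ball, viewed on the torus. -/
def latticeToTorus (d n : ℕ) (η : (Fin d → ℤ) → Bool) : (Fin d → ZMod n) → Bool :=
  fun y => η fun i => torusRep n (y i)

/-! With `u` the indicator of the plus-sites of a configuration in a set, the plus-site count,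
the plus-plus pair count and the connecting-edge count `confConn` are sums of `u` and of
products `u y * u z` over ordered adjacent pairs. On a `Vdeg`-regular graph this makes the Gibbs
weight of `τ` a constant multiple of `W(τ)` computed on the whole vertex set, and `W` is
multiplicative over disjoint sets up to the factor `exp (4b · confConn)`. Hence writing `η` into
`B` multiplies the Gibbs weight of every configuration that is negative on `B` and equal to `σ`
on `δB` by one and the same factor `W(η) · exp (4b · confConn)`. Those configurations are only
part of the conditioning event, so the conditional probability is at most that factor, which is
`W(η)` when `σ = σ⁰` and `W(ησ)/W(σ) ≤ Δ(η) · W(η)/W(σ)` otherwise. -/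

open Finset

section IsingWeights

variable {V : Type*}

def posIndicator (S : Finset V) (c : V → Bool) (x : V) : ℝ :=
  if x ∈ S ∧ c x = true then 1 else 0

lemma posIndicator_confUnion {S T : Finset V} (h : Disjoint S T) (c σ : V → Bool) :
    posIndicator (S ∪ T) (confUnion S c σ) = posIndicator S c + posIndicator T σ := by
  funext x
  by_cases hS : x ∈ S
  · simp [posIndicator, confUnion, hS, Finset.disjoint_left.mp h hS]
  · simp [posIndicator, confUnion, hS]

lemma posIndicator_eq_zero {S : Finset V} {c : V → Bool} (h : ∀ x ∈ S, c x = false) :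
    posIndicator S c = 0 := by
  funext x
  simp +contextual [posIndicator, h]

lemma confUnion_eq_self {S : Finset V} {c τ : V → Bool} (h : ∀ x ∈ S, τ x = c x) :
    confUnion S c τ = τ := by
  funext x
  by_cases hx : x ∈ S <;> simp [confUnion, hx, h]

lemma confW_pos (G : SimpleGraph V) (Vdeg : ℕ) (a b : ℝ) (S : Finset V) (c : V → Bool) :
    0 < confW G Vdeg a b S c :=
  Real.exp_pos _

variable [Fintype V]

lemma mem_occursOn {S : Finset V} {η τ : V → Bool} :
    τ ∈ occursOn S η ↔ ∀ y ∈ S, τ y = η y := by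
  simp [occursOn]

lemma sum_adj_swap {M : Type*} [AddCommMonoid M] (G : SimpleGraph V) (f : V → V → M) :
    ∑ q ∈ univ.filter (fun q : V × V => G.Adj q.1 q.2), f q.1 q.2
      = ∑ q ∈ univ.filter (fun q : V × V => G.Adj q.1 q.2), f q.2 q.1 :=
  Finset.sum_nbij' Prod.swap Prod.swap (by simp [G.adj_comm]) (by simp [G.adj_comm])
    (by simp) (by simp) (by simp)

lemma sum_adj_fst (G : SimpleGraph V) (f : V → ℝ) :
    ∑ q ∈ univ.filter (fun q : V × V => G.Adj q.1 q.2), f q.1 = ∑ y, G.degree y * f y := by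
  rw [Finset.sum_filter, Fintype.sum_prod_type]
  refine Finset.sum_congr rfl fun y _ => ?_
  rw [← Finset.sum_filter]
  simp only [Finset.sum_const, nsmul_eq_mul, ← G.card_neighborFinset_eq_degree,
    G.neighborFinset_eq_filter]

lemma confK_eq_sum (S : Finset V) (c : V → Bool) :
    (confK S c : ℝ) = ∑ x, posIndicator S c x := by
  simp only [confK, posIndicator, Finset.sum_boole]
  congr 2
  ext x
  simp

lemma confConn_eq_sum (G : SimpleGraph V) (S T : Finset V) (c σ : V → Bool) :
    (confConn G S T c σ : ℝ) = ∑ q ∈ univ.filter (fun q : V × V => G.Adj q.1 q.2),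
      posIndicator S c q.1 * posIndicator T σ q.2 := by
  simp only [posIndicator, ite_zero_mul_ite_zero, one_mul, Finset.sum_boole, confConn]
  congr 2
  ext q
  simp only [Finset.mem_filter, Finset.mem_product, Finset.mem_univ, true_and]
  tauto

lemma confPosPairs_eq_sum (G : SimpleGraph V) (S : Finset V) (c : V → Bool) :
    (confPosPairs G S c : ℝ) = ∑ q ∈ univ.filter (fun q : V × V => G.Adj q.1 q.2),
      posIndicator S c q.1 * posIndicator S c q.2 :=
  confConn_eq_sum G S S c c

lemma confConn_eq_zero_of_left {G : SimpleGraph V} {S : Finset V} (T : Finset V) {c : V → Bool}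
    (h : ∀ x ∈ S, c x = false) (σ : V → Bool) : confConn G S T c σ = 0 := by
  simpa [posIndicator_eq_zero h] using confConn_eq_sum G S T c σ

lemma confConn_eq_zero_of_right {G : SimpleGraph V} (S : Finset V) {T : Finset V} (c : V → Bool)
    {σ : V → Bool} (h : ∀ x ∈ T, σ x = false) : confConn G S T c σ = 0 := by
  simpa [posIndicator_eq_zero h] using confConn_eq_sum G S T c σ

lemma confW_eq_one {G : SimpleGraph V} {Vdeg : ℕ} {a b : ℝ} {S : Finset V} {c : V → Bool}
    (h : ∀ x ∈ S, c x = false) : confW G Vdeg a b S c = 1 := by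
  have hK : (confK S c : ℝ) = 0 := by simp [confK_eq_sum, posIndicator_eq_zero h]
  have hP : (confPosPairs G S c : ℝ) = 0 := by simp [confPosPairs_eq_sum, posIndicator_eq_zero h]
  simp [confW, confGamma, hK, hP]

lemma confW_union (G : SimpleGraph V) (Vdeg : ℕ) (a b : ℝ) {S T : Finset V} (h : Disjoint S T)
    (c σ : V → Bool) :
    confW G Vdeg a b (S ∪ T) (confUnion S c σ)
      = confW G Vdeg a b S c * confW G Vdeg a b T σ * Real.exp (4 * b * confConn G S T c σ) := by
  simp only [confW, confGamma, ← Real.exp_add]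
  congr 1
  push_cast
  simp only [confK_eq_sum, confPosPairs_eq_sum, confConn_eq_sum, posIndicator_confUnion h,
    Pi.add_apply, add_mul, mul_add, Finset.sum_add_distrib]
  rw [sum_adj_swap G fun y z => posIndicator T σ y * posIndicator S c z]
  simp only [mul_comm (posIndicator T σ _) (posIndicator S c _)]
  ring

lemma gibbsWeight_eq_mul_confW (G : SimpleGraph V) (Vdeg : ℕ) (hdeg : ∀ x, G.degree x = Vdeg)
    (a b : ℝ) (τ : V → Bool) :
    gibbsWeight G a b τ = Real.exp (-a * Fintype.card V
        + b / 2 * #(univ.filter fun q : V × V => G.Adj q.1 q.2))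
      * confW G Vdeg a b univ τ := by
  set E := univ.filter fun q : V × V => G.Adj q.1 q.2
  set u := posIndicator univ τ
  have hspin : ∀ x, (if τ x then (1 : ℝ) else -1) = 2 * u x - 1 := by
    intro x
    cases h : τ x <;> norm_num [u, posIndicator, h]
  have hfst : ∑ q ∈ E, u q.1 = Vdeg * confK univ τ := by
    simp [E, sum_adj_fst, hdeg, confK_eq_sum, Finset.mul_sum, u]
  have hvert : ∑ x, (2 * u x - 1) = 2 * confK univ τ - Fintype.card V := by
    simp [Finset.sum_sub_distrib, ← Finset.mul_sum, confK_eq_sum, u]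
  have hpair : ∑ q ∈ E, (2 * u q.1 - 1) * (2 * u q.2 - 1)
      = 4 * confPosPairs G univ τ - 4 * Vdeg * confK univ τ + #E := by
    have hsnd : ∑ q ∈ E, u q.2 = ∑ q ∈ E, u q.1 := sum_adj_swap G fun _ z => u z
    simp only [show ∀ s t : ℝ, (2 * s - 1) * (2 * t - 1) = 4 * (s * t) - 2 * s - 2 * t + 1 by
      intros; ring]
    rw [Finset.sum_add_distrib, Finset.sum_sub_distrib, Finset.sum_sub_distrib, ← Finset.mul_sum,
      ← Finset.mul_sum, ← Finset.mul_sum, hsnd, hfst, confPosPairs_eq_sum]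
    simp only [Finset.sum_const, nsmul_eq_mul, mul_one]
    ring
  simp only [gibbsWeight, confW, confGamma, ← Real.exp_add, hspin]
  rw [hvert, hpair]
  congr 1
  push_cast
  ring

lemma mem_outerBoundary {G : SimpleGraph V} {S : Finset V} {z : V} :
    z ∈ outerBoundary G S ↔ z ∉ S ∧ ∃ y ∈ S, G.Adj y z := by
  simp [outerBoundary]

lemma confConn_compl_eq_outerBoundary {G : SimpleGraph V} {S : Finset V} (c : V → Bool)
    {σ τ : V → Bool} (h : ∀ z ∈ outerBoundary G S, τ z = σ z) :
    confConn G S Sᶜ c τ = confConn G S (outerBoundary G S) c σ := by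
  unfold confConn
  congr 1
  ext ⟨y, z⟩
  simp only [Finset.mem_filter, Finset.mem_product, Finset.mem_compl]
  constructor
  · rintro ⟨⟨hy, hz⟩, hadj, hc, hτ⟩
    have hzδ : z ∈ outerBoundary G S := mem_outerBoundary.mpr ⟨hz, y, hy, hadj⟩
    exact ⟨⟨hy, hzδ⟩, hadj, hc, h z hzδ ▸ hτ⟩
  · rintro ⟨⟨hy, hzδ⟩, hadj, hc, hσ⟩
    exact ⟨⟨hy, (mem_outerBoundary.mp hzδ).1⟩, hadj, hc, (h z hzδ).trans hσ⟩

lemma confW_univ_confUnion (G : SimpleGraph V) (Vdeg : ℕ) (a b : ℝ) (S : Finset V)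
    (c : V → Bool) {τ : V → Bool} (hτ : ∀ x ∈ S, τ x = false) :
    confW G Vdeg a b univ (confUnion S c τ)
      = confW G Vdeg a b univ τ * confW G Vdeg a b S c
        * Real.exp (4 * b * confConn G S Sᶜ c τ) := by
  have hc := confW_union G Vdeg a b (disjoint_compl_right (a := S)) c τ
  have hfalse := confW_union G Vdeg a b (disjoint_compl_right (a := S)) (fun _ => false) τ
  rw [union_compl] at hc hfalse
  rw [confUnion_eq_self hτ, confW_eq_one (fun _ _ => rfl),
    confConn_eq_zero_of_left _ (fun _ _ => rfl)] at hfalse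
  rw [hc, hfalse]
  simp only [Nat.cast_zero, mul_zero, Real.exp_zero]
  ring

lemma gibbsWeight_confUnion (G : SimpleGraph V) (Vdeg : ℕ) (hdeg : ∀ x, G.degree x = Vdeg)
    (a b : ℝ) (S : Finset V) (c : V → Bool) {σ τ : V → Bool} (hτS : ∀ x ∈ S, τ x = false)
    (hτσ : ∀ z ∈ outerBoundary G S, τ z = σ z) :
    gibbsWeight G a b (confUnion S c τ)
      = gibbsWeight G a b τ * (confW G Vdeg a b S c
        * Real.exp (4 * b * confConn G S (outerBoundary G S) c σ)) := by
  rw [gibbsWeight_eq_mul_confW G Vdeg hdeg, gibbsWeight_eq_mul_confW G Vdeg hdeg,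
    confW_univ_confUnion G Vdeg a b S c hτS, confConn_compl_eq_outerBoundary c hτσ]
  ring

-- `DecidableEq V` is a parameter so that on a type with computable equality `cylinder` is
-- syntactically the filter one writes there.
def cylinder [DecidableEq V] (S T : Finset V) (c σ : V → Bool) : Finset (V → Bool) :=
  univ.filter fun τ => (∀ y ∈ S, τ y = c y) ∧ ∀ z ∈ T, τ z = σ z

lemma mem_cylinder [DecidableEq V] {S T : Finset V} {c σ τ : V → Bool} :
    τ ∈ cylinder S T c σ ↔ (∀ y ∈ S, τ y = c y) ∧ ∀ z ∈ T, τ z = σ z := by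
  simp [cylinder]

lemma sum_gibbsWeight_cylinder [DecidableEq V] (G : SimpleGraph V) (Vdeg : ℕ)
    (hdeg : ∀ x, G.degree x = Vdeg) (a b : ℝ) (S : Finset V) (c σ : V → Bool) :
    ∑ τ ∈ cylinder S (outerBoundary G S) c σ, gibbsWeight G a b τ
      = (confW G Vdeg a b S c * Real.exp (4 * b * confConn G S (outerBoundary G S) c σ))
        * ∑ τ ∈ cylinder S (outerBoundary G S) (fun _ => false) σ, gibbsWeight G a b τ := by
  have hδ : ∀ z ∈ outerBoundary G S, z ∉ S := fun z hz => (mem_outerBoundary.mp hz).1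
  have hcyl : ∀ {c' τ : V → Bool}, τ ∈ cylinder S (outerBoundary G S) c' σ →
      ∀ c'', confUnion S c'' τ ∈ cylinder S (outerBoundary G S) c'' σ := by
    intro c' τ hτ c''
    refine mem_cylinder.mpr ⟨fun y hy => by simp [confUnion, hy], fun z hz => ?_⟩
    simp [confUnion, hδ z hz, (mem_cylinder.mp hτ).2 z hz]
  have hback : ∀ {c' τ : V → Bool}, τ ∈ cylinder S (outerBoundary G S) c' σ →
      ∀ c'', confUnion S c' (confUnion S c'' τ) = τ := by
    intro c' τ hτ c''
    funext x
    by_cases hx : x ∈ S <;> simp [confUnion, hx, (mem_cylinder.mp hτ).1 x]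
  rw [Finset.mul_sum]
  refine Finset.sum_nbij' (confUnion S (fun _ => false)) (confUnion S c)
    (fun τ hτ => hcyl hτ _) (fun τ hτ => hcyl hτ _) (fun τ hτ => hback hτ _)
    (fun τ hτ => hback hτ _) fun τ hτ => ?_
  calc gibbsWeight G a b τ
      = gibbsWeight G a b (confUnion S c (confUnion S (fun _ => false) τ)) := by
        rw [hback hτ]
    _ = _ := by
        rw [gibbsWeight_confUnion G Vdeg hdeg a b S c (by simp +contextual [confUnion])
          (mem_cylinder.mp (hcyl hτ (fun _ => false))).2, mul_comm]

lemma gibbsProb_div_gibbsProb (G : SimpleGraph V) (a b : ℝ) (A A' : Finset (V → Bool)) :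
    gibbsProb G a b A / gibbsProb G a b A'
      = (∑ τ ∈ A, gibbsWeight G a b τ) / ∑ τ ∈ A', gibbsWeight G a b τ :=
  div_div_div_cancel_right₀
    (Finset.sum_pos (fun _ _ => Real.exp_pos _) Finset.univ_nonempty).ne' _ _

theorem gibbsProb_cylinder_div_le [DecidableEq V] (G : SimpleGraph V) (Vdeg : ℕ)
    (hdeg : ∀ x, G.degree x = Vdeg) (a b : ℝ) (B : Finset V) (c σ : V → Bool) :
    gibbsProb G a b (cylinder B (outerBoundary G B) c σ)
        / gibbsProb G a b (occursOn (outerBoundary G B) σ)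
      ≤ confW G Vdeg a b B c * Real.exp (4 * b * confConn G B (outerBoundary G B) c σ) := by
  have hsub :
      cylinder B (outerBoundary G B) (fun _ => false) σ ⊆ occursOn (outerBoundary G B) σ :=
    fun _ hτ => mem_occursOn.mpr (mem_cylinder.mp hτ).2
  have hpos : 0 < ∑ τ ∈ occursOn (outerBoundary G B) σ, gibbsWeight G a b τ :=
    Finset.sum_pos (fun _ _ => Real.exp_pos _) ⟨σ, mem_occursOn.mpr fun _ _ => rfl⟩
  rw [gibbsProb_div_gibbsProb, sum_gibbsWeight_cylinder G Vdeg hdeg, mul_div_assoc]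
  refine mul_le_of_le_one_right (mul_pos (confW_pos ..) (Real.exp_pos _)).le
    ((div_le_one hpos).mpr ?_)
  exact Finset.sum_le_sum_of_subset_of_nonneg hsub fun _ _ _ => (Real.exp_pos _).le

lemma confW_union_div_le_probGap (G : SimpleGraph V) (Vdeg : ℕ) (a b : ℝ) (B : Finset V)
    (c : V → Bool) {σ : V → Bool} (hσ : ∃ z ∈ outerBoundary G B, σ z = true) :
    confW G Vdeg a b (B ∪ outerBoundary G B) (confUnion B c σ) / confW G Vdeg a b B c
      ≤ probGap G Vdeg a b B c :=
  le_ciSup (f := fun σ' : {σ' : V → Bool // ∃ z ∈ outerBoundary G B, σ' z = true} =>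
    confW G Vdeg a b (B ∪ outerBoundary G B) (confUnion B c σ'.1) / confW G Vdeg a b B c)
    (Set.finite_range _).bddAbove ⟨σ, hσ⟩

lemma confW_mul_exp_confConn_le (G : SimpleGraph V) (Vdeg : ℕ) (a b : ℝ) (B : Finset V)
    (c : V → Bool) {σ : V → Bool} (hσ : ∃ z ∈ outerBoundary G B, σ z = true) :
    confW G Vdeg a b B c * Real.exp (4 * b * confConn G B (outerBoundary G B) c σ)
      ≤ confW G Vdeg a b B c
        * (1 + probGap G Vdeg a b B c / confW G Vdeg a b (outerBoundary G B) σ) := by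
  have hB := confW_pos G Vdeg a b B c
  have hδ := confW_pos G Vdeg a b (outerBoundary G B) σ
  have hgap := confW_union_div_le_probGap G Vdeg a b B c hσ
  rw [confW_union G Vdeg a b (Finset.disjoint_right.mpr fun _ hz => (mem_outerBoundary.mp hz).1)]
    at hgap
  calc confW G Vdeg a b B c * Real.exp (4 * b * confConn G B (outerBoundary G B) c σ)
      = confW G Vdeg a b B c * confW G Vdeg a b (outerBoundary G B) σ
          * Real.exp (4 * b * confConn G B (outerBoundary G B) c σ) / confW G Vdeg a b B c
          * confW G Vdeg a b B c / confW G Vdeg a b (outerBoundary G B) σ := by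
        field_simp
    _ ≤ probGap G Vdeg a b B c * confW G Vdeg a b B c
          / confW G Vdeg a b (outerBoundary G B) σ := by
        gcongr
    _ ≤ _ := by
        rw [mul_one_add, mul_div_assoc', mul_comm (probGap _ _ _ _ _ _)]
        linarith

end IsingWeights

theorem conditional_probability_upper_bound_general
    (d n ρ r : ℕ) [NeZero n] (p : ENNReal)
    (Vdeg : ℕ) (hreg : ∀ x, (torusGraph d n ρ p).degree x = Vdeg)
    (a b : ℝ) (x : Fin d → ZMod n)
    (η : (Fin d → ZMod n) → Bool) (σ : (Fin d → ZMod n) → Bool) :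
    (fun (G : SimpleGraph (Fin d → ZMod n)) (B : Finset (Fin d → ZMod n)) =>
      (fun (δB : Finset (Fin d → ZMod n)) =>
        gibbsProb G a b (Finset.univ.filter fun τ : (Fin d → ZMod n) → Bool =>
            (∀ y ∈ B, τ y = torusTrans x η y) ∧ ∀ z ∈ δB, τ z = σ z)
          / gibbsProb G a b (occursOn δB σ)
        ≤ confW G Vdeg a b B (torusTrans x η)
            * (1 + (if ∀ z ∈ δB, σ z = false then (0 : ℝ) else 1)
                * probGap G Vdeg a b B (torusTrans x η) / confW G Vdeg a b δB σ)
      ) (outerBoundary G B)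
    ) (torusGraph d n ρ p) (torusBall d n ρ p x r) := by
  dsimp only
  refine (gibbsProb_cylinder_div_le _ Vdeg hreg a b _ _ σ).trans ?_
  split_ifs with hσ
  · rw [confConn_eq_zero_of_right _ _ hσ]
    simp
  · simpa only [one_mul] using
      confW_mul_exp_confConn_le _ Vdeg a b _ (torusTrans x η) (by simpa using hσ)

/-- Lemma 2.4, upper bound: `μ_{a,b}(I_x^η = 1 | σ) ≤ Wₙ(η)·(1 + 1_{σ≠σ⁰}·Δₙ(η)/Wₙ(σ))`,
where `σ⁰` is the all-negative boundary configuration. -/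
theorem conditional_probability_upper_bound
    (d n ρ r : ℕ) [NeZero n] (p : ENNReal) (hp : 1 ≤ p) (hn : 2 * ρ * r < n)
    (Vdeg : ℕ) (hreg : ∀ x, (torusGraph d n ρ p).degree x = Vdeg)
    (a b : ℝ) (ha : a < 0) (hb : 0 ≤ b) (x : Fin d → ZMod n)
    (η : (Fin d → ZMod n) → Bool) (σ : (Fin d → ZMod n) → Bool) :
    (fun (G : SimpleGraph (Fin d → ZMod n)) (B : Finset (Fin d → ZMod n)) =>
      (fun (δB : Finset (Fin d → ZMod n)) =>
        gibbsProb G a b (Finset.univ.filter fun τ : (Fin d → ZMod n) → Bool =>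
            (∀ y ∈ B, τ y = torusTrans x η y) ∧ ∀ z ∈ δB, τ z = σ z)
          / gibbsProb G a b (occursOn δB σ)
        ≤ confW G Vdeg a b B (torusTrans x η)
            * (1 + (if ∀ z ∈ δB, σ z = false then (0 : ℝ) else 1)
                * probGap G Vdeg a b B (torusTrans x η) / confW G Vdeg a b δB σ)
      ) (outerBoundary G B)
    ) (torusGraph d n ρ p) (torusBall d n ρ p x r) :=
  conditional_probability_upper_bound_general d n ρ r p Vdeg hreg a b x η σ

end
end

section
/- If η' is a local configuration whose set of positive vertices contains that of η, then γ(η') ≥ γ(η) − (k(η') − k(η))·𝒱, and consequently Wₙ(η')/Wₙ(η) ≤ exp((2a + 2𝒱b)(k(η') − k(η))). -/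
/-!
A pair of adjacent vertices that is positive for `η'` but not for `η` has an endpoint in
`V₊(η') \ V₊(η)`, a set of `k(η') − k(η)` vertices, each of which is an endpoint of at most `2𝒱`
ordered adjacent pairs. So the number of positive pairs grows by at most `2𝒱 (k(η') − k(η))`
while `𝒱 k` grows by exactly `𝒱 (k(η') − k(η))`, which gives the perimeter bound; since `b ≥ 0`
the weight bound follows by exponentiating.
-/

open Filter

attribute [local instance] Classical.propDecidable

noncomputable section

def positiveVertices {V : Type*} (S : Finset V) (c : V → Bool) : Finset V :=
  S.filter fun x => c x = true

section Perimeter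

open Finset

variable {V : Type*}

theorem confK_sub_confK_of_subset {S : Finset V} {c c' : V → Bool}
    (h : positiveVertices S c ⊆ positiveVertices S c') :
    (confK S c' : ℤ) - confK S c = #(positiveVertices S c' \ positiveVertices S c) := by
  rw [card_sdiff_of_subset h, Nat.cast_sub (card_le_card h)]
  rfl

variable [Fintype V] {G : SimpleGraph V} {Δ : ℕ}

theorem card_filter_adj_fst_mem_le (hdeg : ∀ x, G.degree x ≤ Δ) (s : Finset (V × V))
    (D : Finset V) : #{q ∈ s | G.Adj q.1 q.2 ∧ q.1 ∈ D} ≤ Δ * #D := by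
  refine card_le_mul_card_image_of_maps_to (f := Prod.fst) (fun q hq => (mem_filter.1 hq).2.2)
    Δ fun x _ => ?_
  calc #{q ∈ {q ∈ s | G.Adj q.1 q.2 ∧ q.1 ∈ D} | q.1 = x}
      ≤ #(G.neighborFinset x) := by
        refine card_le_card_of_injOn Prod.snd (fun q hq => ?_) fun q hq r hr hqr => ?_
        · simp only [coe_filter, mem_filter, Set.mem_ofPred_eq] at hq
          simpa [← hq.2] using hq.1.2.1
        · simp only [coe_filter, mem_filter, Set.mem_ofPred_eq] at hq hr
          exact Prod.ext (hq.2.trans hr.2.symm) hqr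
    _ ≤ Δ := (G.card_neighborFinset_eq_degree x).trans_le (hdeg x)

theorem card_filter_adj_snd_mem_le (hdeg : ∀ x, G.degree x ≤ Δ) (s : Finset (V × V))
    (D : Finset V) : #{q ∈ s | G.Adj q.1 q.2 ∧ q.2 ∈ D} ≤ Δ * #D := by
  have := card_filter_adj_fst_mem_le hdeg (s.map (Equiv.prodComm V V).toEmbedding) D
  rw [filter_map, card_map] at this
  convert this using 2
  ext q
  rw [mem_filter, mem_filter]
  simp [G.adj_comm q.1]

theorem confPosPairs_le_add (hdeg : ∀ x, G.degree x ≤ Δ) (S : Finset V) (c c' : V → Bool) :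
    confPosPairs G S c' ≤
      confPosPairs G S c + 2 * Δ * #(positiveVertices S c' \ positiveVertices S c) := by
  set D := positiveVertices S c' \ positiveVertices S c
  have hcover : {q ∈ S ×ˢ S | G.Adj q.1 q.2 ∧ c' q.1 = true ∧ c' q.2 = true} ⊆
      {q ∈ S ×ˢ S | G.Adj q.1 q.2 ∧ c q.1 = true ∧ c q.2 = true} ∪
        {q ∈ S ×ˢ S | G.Adj q.1 q.2 ∧ q.1 ∈ D} ∪ {q ∈ S ×ˢ S | G.Adj q.1 q.2 ∧ q.2 ∈ D} := by
    intro q hq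
    simp only [mem_filter, mem_product] at hq
    simp only [D, positiveVertices, mem_union, mem_filter, mem_product]
    by_cases h1 : c q.1 = true <;> by_cases h2 : c q.2 = true <;> simp_all
  calc confPosPairs G S c'
      ≤ confPosPairs G S c + #{q ∈ S ×ˢ S | G.Adj q.1 q.2 ∧ q.1 ∈ D} +
          #{q ∈ S ×ˢ S | G.Adj q.1 q.2 ∧ q.2 ∈ D} :=
        (card_le_card hcover).trans <| (card_union_le _ _).trans <|
          Nat.add_le_add_right (card_union_le _ _) _
    _ ≤ confPosPairs G S c + Δ * #D + Δ * #D := by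
        gcongr
        exacts [card_filter_adj_fst_mem_le hdeg _ D, card_filter_adj_snd_mem_le hdeg _ D]
    _ = confPosPairs G S c + 2 * Δ * #D := by ring

theorem confGamma_sub_le_of_subset {Vdeg : ℕ} (hdeg : ∀ x, G.degree x ≤ Vdeg) {S : Finset V}
    {c c' : V → Bool} (h : positiveVertices S c ⊆ positiveVertices S c') :
    confGamma G Vdeg S c - ((confK S c' : ℤ) - confK S c) * Vdeg ≤ confGamma G Vdeg S c' := by
  have hpairs : (confPosPairs G S c' : ℤ) ≤
      confPosPairs G S c + 2 * Vdeg * ((confK S c' : ℤ) - confK S c) := by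
    rw [confK_sub_confK_of_subset h]
    exact_mod_cast confPosPairs_le_add hdeg S c c'
  simp only [confGamma]
  linarith

end Perimeter

theorem confW_div_le_exp {V : Type*} {G : SimpleGraph V} {Vdeg : ℕ} {a b : ℝ} (hb : 0 ≤ b)
    {S : Finset V} {c c' : V → Bool}
    (hγ : confGamma G Vdeg S c - ((confK S c' : ℤ) - confK S c) * Vdeg ≤ confGamma G Vdeg S c') :
    confW G Vdeg a b S c' / confW G Vdeg a b S c ≤
      Real.exp ((2 * a + 2 * Vdeg * b) * ((confK S c' : ℝ) - confK S c)) := by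
  have hγ' : (confGamma G Vdeg S c : ℝ) - ((confK S c' : ℝ) - confK S c) * Vdeg ≤
      confGamma G Vdeg S c' := by exact_mod_cast hγ
  rw [confW, confW, ← Real.exp_sub, Real.exp_le_exp]
  linarith [mul_le_mul_of_nonneg_left hγ' hb]

theorem perimeter_weight_of_positive_superset_general {Vn : Type*} [Fintype Vn]
    (G : SimpleGraph Vn) (Vdeg : ℕ) (hreg : ∀ x, G.degree x = Vdeg)
    (a b : ℝ) (hb : 0 ≤ b)
    (B : Finset Vn) (η η' : Vn → Bool)
    (hsub : ∀ y ∈ B, η y = true → η' y = true) :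
    confGamma G Vdeg B η - ((confK B η' : ℤ) - confK B η) * Vdeg ≤ confGamma G Vdeg B η'
    ∧ confW G Vdeg a b B η' / confW G Vdeg a b B η
        ≤ Real.exp ((2 * a + 2 * Vdeg * b) * ((confK B η' : ℝ) - confK B η)) := by
  have hpos : positiveVertices B η ⊆ positiveVertices B η' := fun y hy => by
    simp only [positiveVertices, Finset.mem_filter] at hy ⊢
    exact ⟨hy.1, hsub y hy.1 hy.2⟩
  have hγ := confGamma_sub_le_of_subset (fun x => (hreg x).le) hpos
  exact ⟨hγ, confW_div_le_exp hb hγ⟩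

/-- If the positive vertices of `η'` contain those of `η`, then
`γ(η') ≥ γ(η) − (k(η') − k(η))·𝒱` and consequently
`Wₙ(η')/Wₙ(η) ≤ exp((2a + 2𝒱b)(k(η') − k(η)))`. -/
theorem perimeter_weight_of_positive_superset {Vn : Type*} [Fintype Vn]
    (G : SimpleGraph Vn) (Vdeg : ℕ) (hreg : ∀ x, G.degree x = Vdeg)
    (a b : ℝ) (ha : a < 0) (hb : 0 ≤ b)
    (B : Finset Vn) (η η' : Vn → Bool)
    (hsub : ∀ y ∈ B, η y = true → η' y = true) :
    confGamma G Vdeg B η - ((confK B η' : ℤ) - confK B η) * Vdeg ≤ confGamma G Vdeg B η'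
    ∧ confW G Vdeg a b B η' / confW G Vdeg a b B η
        ≤ Real.exp ((2 * a + 2 * Vdeg * b) * ((confK B η' : ℝ) - confK B η)) :=
  perimeter_weight_of_positive_superset_general G Vdeg hreg a b hb B η η' hsub

end
end

section
/- If a(n) + 2𝒱·b(n) ≤ 0 for n large, then for every V ⊆ Vn and every configuration ζ on V, μ_{a,b}(I_V^ζ = 1) ≤ 2^{|δV|}·Wₙ(ζ); i.e. hypothesis (H2) holds with constant C = 2^{|δV|}. -/
/-!
On a `𝒱`-regular graph the Gibbs weight of `σ` is, up to a constant factor, the weight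
`exp (2a|X| - 2b(𝒱|X| - e(X, X)))` of its plus set `X`, where `e` counts ordered adjacent pairs.
Take `σ` equal to `ζ` on `V` and erase its plus spins on `V ∪ δV`. The plus set of `σ` splits as
`P ∪ R ∪ T`, with `P` the plus set of `ζ`, `R` that of the erased configuration and `T ⊆ δV`.
No edge joins `P` to `R`, so the weight factorises over `P ∪ R`; adding `T` changes the exponent by
at most `2|T|(a + 𝒱b) ≤ 0`, since a vertex of `T` lies on at most `2𝒱` ordered adjacent pairs.
So `σ` weighs at most `Wₙ(ζ)` times its erasure, and erasure is at most `2^|δV|`-to-one on the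
event `{σ = ζ on V}`.
-/

open Filter

attribute [local instance] Classical.propDecidable

noncomputable section

open Finset

namespace SimpleGraph

variable {V : Type*} {G : SimpleGraph V}

lemma interedges_union_of_forall_not_adj {s t : Finset V}
    (hst : ∀ x ∈ s, ∀ y ∈ t, ¬ G.Adj x y) :
    G.interedges (s ∪ t) (s ∪ t) = G.interedges s s ∪ G.interedges t t := by
  ext q
  simp only [mem_interedges_iff, mem_union]
  have := hst q.1
  have := hst q.2
  have := G.adj_symm (u := q.1) (v := q.2)
  tauto

lemma card_interedges_comm (s t : Finset V) : #(G.interedges s t) = #(G.interedges t s) :=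
  have : Std.Symm G.Adj := ⟨fun _ _ h => h.symm⟩
  Rel.card_interedges_comm _ _

variable [Fintype V]

lemma card_interedges_univ_right (s : Finset V) :
    #(G.interedges s univ) = ∑ x ∈ s, G.degree x := by
  rw [interedges_def, card_filter, sum_product]
  refine sum_congr rfl fun x _ => ?_
  rw [← card_filter, ← card_neighborFinset_eq_degree, neighborFinset_eq_filter]

lemma card_interedges_le_mul_card {Vdeg : ℕ} (hdeg : ∀ x, G.degree x ≤ Vdeg) (s t : Finset V) :
    #(G.interedges s t) ≤ Vdeg * #s :=
  calc #(G.interedges s t) ≤ #(G.interedges s univ) :=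
        card_le_card (G.interedges_mono subset_rfl (subset_univ t))
    _ = ∑ x ∈ s, G.degree x := card_interedges_univ_right s
    _ ≤ Vdeg * #s := by rw [mul_comm]; exact sum_le_card_nsmul s _ _ fun x _ => hdeg x

lemma card_interedges_union_le {Vdeg : ℕ} (hdeg : ∀ x, G.degree x ≤ Vdeg) (s t : Finset V) :
    #(G.interedges (s ∪ t) (s ∪ t)) ≤ #(G.interedges s s) + 2 * Vdeg * #t := by
  have hsub : G.interedges (s ∪ t) (s ∪ t)
      ⊆ G.interedges s s ∪ G.interedges t univ ∪ G.interedges univ t := by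
    intro q
    simp only [mem_interedges_iff, mem_union, mem_univ, true_and]
    tauto
  have hunion := (card_le_card hsub).trans <| (card_union_le _ _).trans <|
    Nat.add_le_add_right (card_union_le _ _) _
  have hdeg_t := card_interedges_le_mul_card hdeg t univ
  rw [card_interedges_comm univ t] at hunion
  rw [mul_assoc]
  omega

end SimpleGraph

section ClusterWeight

variable {V : Type*} (G : SimpleGraph V) (Vdeg : ℕ) (a b : ℝ)

def clusterWeight (X : Finset V) : ℝ :=
  Real.exp (2 * a * #X - 2 * b * ((Vdeg : ℝ) * #X - #(G.interedges X X)))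

lemma confW_eq_clusterWeight (S : Finset V) (c : V → Bool) :
    confW G Vdeg a b S c = clusterWeight G Vdeg a b {x ∈ S | c x = true} := by
  have hpairs : confPosPairs G S c = #(G.interedges {x ∈ S | c x = true} {x ∈ S | c x = true}) := by
    rw [confPosPairs, SimpleGraph.interedges_def]
    congr 1
    ext q
    simp only [mem_filter, mem_product]
    tauto
  rw [confW, clusterWeight, confGamma, confK, hpairs]
  push_cast
  rfl

variable {G Vdeg a b}

lemma clusterWeight_union_of_forall_not_adj {s t : Finset V} (hst : Disjoint s t)
    (hadj : ∀ x ∈ s, ∀ y ∈ t, ¬ G.Adj x y) :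
    clusterWeight G Vdeg a b (s ∪ t) = clusterWeight G Vdeg a b s * clusterWeight G Vdeg a b t := by
  have hpairs : #(G.interedges (s ∪ t) (s ∪ t)) = #(G.interedges s s) + #(G.interedges t t) := by
    rw [SimpleGraph.interedges_union_of_forall_not_adj hadj,
      card_union_of_disjoint (disjoint_left.2 fun q hs ht => disjoint_left.1 hst
        (G.mem_interedges_iff.1 hs).1 (G.mem_interedges_iff.1 ht).1)]
  rw [clusterWeight, clusterWeight, clusterWeight, ← Real.exp_add, hpairs,
    card_union_of_disjoint hst]
  push_cast
  ring_nf

variable [Fintype V]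

lemma clusterWeight_union_le (hdeg : ∀ x, G.degree x ≤ Vdeg) (hb : 0 ≤ b)
    (hab : a + Vdeg * b ≤ 0) {s t : Finset V} (hst : Disjoint s t) :
    clusterWeight G Vdeg a b (s ∪ t) ≤ clusterWeight G Vdeg a b s := by
  have hpairs : (#(G.interedges (s ∪ t) (s ∪ t)) : ℝ) ≤ #(G.interedges s s) + 2 * Vdeg * #t := by
    exact_mod_cast SimpleGraph.card_interedges_union_le hdeg s t
  rw [clusterWeight, clusterWeight, Real.exp_le_exp, card_union_of_disjoint hst]
  push_cast
  nlinarith [mul_nonneg hb (Nat.cast_nonneg (α := ℝ) #t)]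

end ClusterWeight

lemma sum_comp_le_mul_sum {ι κ : Type*} [Fintype κ] [DecidableEq κ] (s : Finset ι) (g : ι → κ)
    {f : κ → ℝ} (hf : ∀ k, 0 ≤ f k) {M : ℕ} (hM : ∀ k, #{i ∈ s | g i = k} ≤ M) :
    ∑ i ∈ s, f (g i) ≤ M * ∑ k, f k := by
  rw [sum_comp, mul_sum]
  calc ∑ k ∈ s.image g, #{i ∈ s | g i = k} • f k ≤ ∑ k ∈ s.image g, M * f k :=
        sum_le_sum fun k _ => by
          rw [nsmul_eq_mul]
          exact mul_le_mul_of_nonneg_right (by exact_mod_cast hM k) (hf k)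
    _ ≤ ∑ k, M * f k :=
        sum_le_sum_of_subset_of_nonneg (subset_univ _) fun k _ _ => mul_nonneg M.cast_nonneg (hf k)

lemma card_filter_confUnion_eq_le {V : Type*} [Fintype V] (S B : Finset V) (ζ c τ : V → Bool) :
    #{σ ∈ occursOn S ζ | confUnion (S ∪ B) c σ = τ} ≤ 2 ^ #B := by
  calc #{σ ∈ occursOn S ζ | confUnion (S ∪ B) c σ = τ} ≤ #(univ : Finset (B → Bool)) := by
        refine card_le_card_of_injOn (fun σ z => σ z) (fun _ _ => mem_univ _) ?_
        intro σ₁ h₁ σ₂ h₂ hB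
        simp only [coe_filter, occursOn, mem_filter, mem_univ, true_and] at h₁ h₂
        funext x
        by_cases hxS : x ∈ S
        · rw [h₁.1 x hxS, h₂.1 x hxS]
        by_cases hxB : x ∈ B
        · exact congrFun hB ⟨x, hxB⟩
        have hx : x ∉ S ∪ B := by simp [hxS, hxB]
        have e₁ := congrFun h₁.2 x
        have e₂ := congrFun h₂.2 x
        simp only [confUnion, if_neg hx] at e₁ e₂
        rw [e₁, e₂]
    _ = 2 ^ #B := by simp

section Gibbs

variable {V : Type*} [Fintype V] {G : SimpleGraph V} {Vdeg : ℕ} {a b : ℝ}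

lemma SimpleGraph.IsRegularOfDegree.card_interedges_univ_right (hG : G.IsRegularOfDegree Vdeg)
    (s : Finset V) : #(G.interedges s univ) = Vdeg * #s := by
  rw [SimpleGraph.card_interedges_univ_right, sum_congr rfl fun x _ => hG x, sum_const, smul_eq_mul,
    mul_comm]

lemma gibbsWeight_eq_mul_clusterWeight (hG : G.IsRegularOfDegree Vdeg) (σ : V → Bool) :
    gibbsWeight G a b σ = Real.exp (Fintype.card V * (b * Vdeg / 2 - a))
      * clusterWeight G Vdeg a b {x | σ x = true} := by
  set X : Finset V := {x | σ x = true}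
  set E := univ.filter fun q : V × V => G.Adj q.1 q.2
  have hvert : ∑ x, (if σ x then (1 : ℝ) else -1) = 2 * #X - Fintype.card V :=
    calc ∑ x, (if σ x then (1 : ℝ) else -1) = ∑ x, (2 * (if σ x = true then (1 : ℝ) else 0) - 1) :=
          sum_congr rfl fun x _ => by cases σ x <;> norm_num
      _ = 2 * #X - Fintype.card V := by rw [sum_sub_distrib, ← mul_sum, sum_boole]; simp [X]
  have hcount : ∀ s t : Finset V,
      ∑ q ∈ E, (if q.1 ∈ s ∧ q.2 ∈ t then (1 : ℝ) else 0) = #(G.interedges s t) := by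
    intro s t
    rw [sum_boole, filter_filter, SimpleGraph.interedges_def]
    congr 2
    ext q
    simp only [mem_filter, mem_univ, mem_product, true_and]
    tauto
  have hpair : ∀ q : V × V, (if σ q.1 then (1 : ℝ) else -1) * (if σ q.2 then (1 : ℝ) else -1)
      = 4 * (if q.1 ∈ X ∧ q.2 ∈ X then 1 else 0) - 2 * (if q.1 ∈ X ∧ q.2 ∈ univ then 1 else 0)
        - 2 * (if q.1 ∈ univ ∧ q.2 ∈ X then 1 else 0) + (if q.1 ∈ univ ∧ q.2 ∈ univ then 1 else 0) := by
    intro q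
    cases h₁ : σ q.1 <;> cases h₂ : σ q.2 <;> simp [X, h₁, h₂] <;> norm_num
  have hedge : ∑ q ∈ E, (if σ q.1 then (1 : ℝ) else -1) * (if σ q.2 then (1 : ℝ) else -1)
      = 4 * #(G.interedges X X) - 4 * Vdeg * #X + Vdeg * Fintype.card V := by
    simp only [hpair, sum_add_distrib, sum_sub_distrib, ← mul_sum, hcount,
      SimpleGraph.card_interedges_comm univ X, hG.card_interedges_univ_right, card_univ]
    push_cast
    ring
  rw [gibbsWeight, clusterWeight, ← Real.exp_add, hvert, hedge]
  ring_nf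

lemma gibbsProb_eq_sum_clusterWeight_div (hG : G.IsRegularOfDegree Vdeg) (A : Finset (V → Bool)) :
    gibbsProb G a b A = (∑ σ ∈ A, clusterWeight G Vdeg a b {x | σ x = true})
      / ∑ σ : V → Bool, clusterWeight G Vdeg a b {x | σ x = true} := by
  simp only [gibbsProb, gibbsWeight_eq_mul_clusterWeight hG, ← mul_sum]
  exact mul_div_mul_left _ _ (Real.exp_pos _).ne'

lemma clusterWeight_le_confW_mul_clusterWeight_confUnion (hdeg : ∀ x, G.degree x ≤ Vdeg)
    (hb : 0 ≤ b) (hab : a + Vdeg * b ≤ 0) {S : Finset V} {ζ σ : V → Bool}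
    (hσ : ∀ y ∈ S, σ y = ζ y) :
    clusterWeight G Vdeg a b {x | σ x = true} ≤ confW G Vdeg a b S ζ
      * clusterWeight G Vdeg a b
          {x | confUnion (S ∪ outerBoundary G S) (fun _ => false) σ x = true} := by
  set B := outerBoundary G S
  set P : Finset V := {x ∈ S | ζ x = true}
  set R : Finset V := {x | confUnion (S ∪ B) (fun _ => false) σ x = true}
  set T : Finset V := {x ∈ B | σ x = true}
  have hB : ∀ {y}, y ∈ B ↔ y ∉ S ∧ ∃ x ∈ S, G.Adj x y := by simp [B, outerBoundary]
  have hR : ∀ {y}, y ∈ R ↔ y ∉ S ∧ y ∉ B ∧ σ y = true := by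
    intro y
    by_cases hyS : y ∈ S <;> by_cases hyB : y ∈ B <;> simp [R, confUnion, hyS, hyB]
  have hsplit : ({x | σ x = true} : Finset V) = P ∪ R ∪ T := by
    ext y
    by_cases hyS : y ∈ S
    · simp [P, T, hR, hyS, hσ y hyS]
    · by_cases hyB : y ∈ B <;> simp [P, T, hR, hyS, hyB]
  have hPR : ∀ x ∈ P, ∀ y ∈ R, ¬ G.Adj x y := fun x hx y hy hxy =>
    (hR.1 hy).2.1 (hB.2 ⟨(hR.1 hy).1, x, (mem_filter.1 hx).1, hxy⟩)
  have hdisjPR : Disjoint P R := disjoint_left.2 fun x hx hxR => (hR.1 hxR).1 (mem_filter.1 hx).1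
  have hdisjT : Disjoint (P ∪ R) T := by
    refine disjoint_left.2 fun x hx hxT => ?_
    have hxB := (mem_filter.1 hxT).1
    rcases mem_union.1 hx with hxP | hxR
    · exact (hB.1 hxB).1 (mem_filter.1 hxP).1
    · exact (hR.1 hxR).2.1 hxB
  rw [hsplit, confW_eq_clusterWeight, ← clusterWeight_union_of_forall_not_adj hdisjPR hPR]
  exact clusterWeight_union_le hdeg hb hab hdisjT

theorem gibbsProb_occursOn_le (hG : G.IsRegularOfDegree Vdeg) (hb : 0 ≤ b)
    (hab : a + Vdeg * b ≤ 0) (S : Finset V) (ζ : V → Bool) :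
    gibbsProb G a b (occursOn S ζ) ≤ 2 ^ #(outerBoundary G S) * confW G Vdeg a b S ζ := by
  set w : (V → Bool) → ℝ := fun σ => clusterWeight G Vdeg a b {x | σ x = true}
  set clear : (V → Bool) → V → Bool := confUnion (S ∪ outerBoundary G S) fun _ => false
  have hw : ∀ σ, 0 < w σ := fun σ => Real.exp_pos _
  have hZ : 0 < ∑ σ, w σ := sum_pos (fun σ _ => hw σ) univ_nonempty
  have hstep : ∀ σ ∈ occursOn S ζ, w σ ≤ confW G Vdeg a b S ζ * w (clear σ) :=
    fun σ hσ => clusterWeight_le_confW_mul_clusterWeight_confUnion (fun x => (hG x).le) hb hab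
      (mem_filter.1 hσ).2
  have hfiber : ∑ σ ∈ occursOn S ζ, w (clear σ) ≤ 2 ^ #(outerBoundary G S) * ∑ τ, w τ := by
    have := sum_comp_le_mul_sum (occursOn S ζ) clear (fun τ => (hw τ).le)
      (card_filter_confUnion_eq_le S (outerBoundary G S) ζ _)
    exact_mod_cast this
  rw [gibbsProb_eq_sum_clusterWeight_div hG, div_le_iff₀ hZ]
  calc ∑ σ ∈ occursOn S ζ, w σ ≤ ∑ σ ∈ occursOn S ζ, confW G Vdeg a b S ζ * w (clear σ) :=
        sum_le_sum hstep
    _ = confW G Vdeg a b S ζ * ∑ σ ∈ occursOn S ζ, w (clear σ) := (mul_sum _ _ _).symm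
    _ ≤ confW G Vdeg a b S ζ * (2 ^ #(outerBoundary G S) * ∑ τ, w τ) :=
        mul_le_mul_of_nonneg_left hfiber (Real.exp_pos _).le
    _ = 2 ^ #(outerBoundary G S) * confW G Vdeg a b S ζ * ∑ τ, w τ := by ring

end Gibbs

theorem H2_of_field_pair_potential_general
    (d ρ : ℕ) (p : ENNReal) (Vdeg : ℕ)
    (a b : ℕ → ℝ) (hb : ∀ n, 0 ≤ b n)
    (hreg : ∀ (n : ℕ) [NeZero n], 2 * ρ < n → ∀ x, (torusGraph d n ρ p).degree x = Vdeg)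
    (hab : ∃ N₀ : ℕ, ∀ n ≥ N₀, a n + 2 * (Vdeg : ℝ) * b n ≤ 0) :
    ∃ N : ℕ, ∀ (n : ℕ) [NeZero n], N ≤ n →
      ∀ (V : Finset (Fin d → ZMod n)) (ζ : (Fin d → ZMod n) → Bool),
        gibbsProb (torusGraph d n ρ p) (a n) (b n) (occursOn V ζ)
          ≤ (2 : ℝ) ^ (outerBoundary (torusGraph d n ρ p) V).card
            * confW (torusGraph d n ρ p) Vdeg (a n) (b n) V ζ := by
  obtain ⟨N₀, hN₀⟩ := hab
  refine ⟨max N₀ (2 * ρ + 1), fun n _ hn V ζ => ?_⟩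
  have hab' : a n + Vdeg * b n ≤ 0 := by
    have := mul_nonneg (Nat.cast_nonneg Vdeg) (hb n)
    linarith [hN₀ n (le_of_max_le_left hn)]
  exact gibbsProb_occursOn_le (hreg n (le_of_max_le_right hn)) (hb n) hab' V ζ

/-- Proposition 3.2, second half: if `a(n) + 2𝒱·b(n) ≤ 0` for `n` large enough, then for every
`V ⊆ Vn` and every configuration `ζ` on `V`, `μ_{a,b}(I_V^ζ = 1) ≤ 2^{|δV|}·Wₙ(ζ)`;
i.e. hypothesis (H2) holds with constant `C = 2^{|δV|}`. -/
theorem H2_of_field_pair_potential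
    (d ρ : ℕ) (p : ENNReal) (hp : 1 ≤ p) (Vdeg : ℕ)
    (a b : ℕ → ℝ) (ha : ∀ n, a n < 0) (hb : ∀ n, 0 ≤ b n)
    (hreg : ∀ (n : ℕ) [NeZero n], 2 * ρ < n → ∀ x, (torusGraph d n ρ p).degree x = Vdeg)
    (hab : ∃ N₀ : ℕ, ∀ n ≥ N₀, a n + 2 * (Vdeg : ℝ) * b n ≤ 0) :
    ∃ N : ℕ, ∀ (n : ℕ) [NeZero n], N ≤ n →
      ∀ (V : Finset (Fin d → ZMod n)) (ζ : (Fin d → ZMod n) → Bool),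
        gibbsProb (torusGraph d n ρ p) (a n) (b n) (occursOn V ζ)
          ≤ (2 : ℝ) ^ (outerBoundary (torusGraph d n ρ p) V).card
            * confW (torusGraph d n ρ p) Vdeg (a n) (b n) V ζ :=
  H2_of_field_pair_potential_general d ρ p Vdeg a b hb hreg hab

end
end
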